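/- Let (X,s) be a minimal dynamical system and let x ∈ X. Then (X,s) has quasi-discrete spectrum if and only if the linear span of ω_x C(X) ∩ 𝒫 is dense in ω_x C(X). Consequently, if (X,s) has quasi-discrete spectrum, then ω_x C(X) ⊆ 𝒲. -/

import Mathlib

noncomputable section

/-- The quasi-eigenfunction groups `G_m(X,u)` inside `C(X, ℂ)` (unimodular
continuous functions): `G_0` = unimodular constants,
`G_{m+1} = {g unimodular : g ∘ u = f · g for some f ∈ G_m}`. -/
def QEm {X : Type*} [TopologicalSpace X] (u : X → X) : ℕ → Set C(X, ℂ)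
  | 0 => {g | (∀ x, ‖g x‖ = 1) ∧ ∃ c : ℂ, ∀ x, g x = c}
  | m + 1 => {g | (∀ x, ‖g x‖ = 1) ∧ ∃ f ∈ QEm u m, ∀ x, g (u x) = f x * g x}

/-- `(X,u)` has (topological) quasi-discrete spectrum: the linear span of the
quasi-eigenfunctions `G(X,u) = ⋃_m G_m(X,u)` is dense in `C(X, ℂ)`. -/
def HasQDS {X : Type*} [TopologicalSpace X] (u : X → X) : Prop :=
  Dense (↑(Submodule.span ℂ (⋃ m, QEm u m)) : Set C(X, ℂ))

/-- The map `ω_x : C(X) → ℓ^∞(ℤ)`, `ω_x(f)(n) = f(s^n x)`. -/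
def omegaSeq {X : Type*} [TopologicalSpace X] [CompactSpace X]
    (s : Equiv.Perm X) (x : X) (f : C(X, ℂ)) : BoundedContinuousFunction ℤ ℂ :=
  (BoundedContinuousFunction.mkOfCompact f).compContinuous
    ⟨fun n : ℤ => (s ^ n) x, continuous_of_discreteTopology⟩

/-- `𝒫_m ⊆ ℓ^∞(ℤ)`: sequences `n ↦ e^{2πi p(n)}`, `p` a real polynomial of
degree at most `m`. -/
def Pdeg (m : ℕ) : Set (BoundedContinuousFunction ℤ ℂ) :=
  {F | ∃ p : Polynomial ℝ, p.natDegree ≤ m ∧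
    ∀ n : ℤ, F n = Complex.exp (2 * Real.pi * Complex.I * ((p.eval (n : ℝ) : ℝ) : ℂ))}

/-- `𝒫 = ⋃_m 𝒫_m`: all sequences of polynomial type. -/
def Pall : Set (BoundedContinuousFunction ℤ ℂ) := ⋃ m, Pdeg m

/-- The Weyl algebra `𝒲`: the closed linear span of `𝒫` in `ℓ^∞(ℤ)`. -/
def Wset : Set (BoundedContinuousFunction ℤ ℂ) :=
  closure (↑(Submodule.span ℂ Pall) : Set (BoundedContinuousFunction ℤ ℂ))

/-!
Write `e(t) = exp(2πit)`. Since the orbit of `x` is dense, `ω_x` is an isometry, so the span of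
`G(X,s)` is dense in `C(X)` iff its image is dense in `ω_x C(X)`; it remains to see that
`ω_x G(X,s) = ω_x C(X) ∩ 𝒫`. Along the orbit, `g ∘ s = f · g` reads `u(n+1) = ω_x f(n) · u(n)`,
so if `ω_x f = e(q(n))` then `ω_x g = e(p(n))` for a discrete antiderivative `p` of `q`.
Conversely, if `ω_x g = e(p(n))` with `deg p ≤ d`, then `g` is unimodular by density, and
`f = (g ∘ s) · ḡ` has `ω_x f = e(p(n+1) - p(n))` of degree `< d`, so `g ∈ G_d` by induction.
-/

open Polynomial Set

theorem Polynomial.exists_eval_add_one_eq {K : Type*} [Field K] [CharZero K] (q : K[X]) (a : K) :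
    ∃ p : K[X], p.eval 0 = a ∧ ∀ t, p.eval (t + 1) = p.eval t + q.eval t := by
  have hB (n : ℕ) : ((bernoulli n).map (algebraMap ℚ K)).comp (1 + X) =
      (bernoulli n).map (algebraMap ℚ K) + n • X ^ (n - 1) := by
    simpa [map_comp] using congrArg (map (algebraMap ℚ K)) (bernoulli_comp_one_add_X n)
  set P := ∑ k ∈ Finset.range (q.natDegree + 1),
    C (q.coeff k / (k + 1)) * (bernoulli (k + 1)).map (algebraMap ℚ K)
  -- `B_{k+1} / (k + 1)` is a discrete antiderivative of `X ^ k`.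
  have hP : P.comp (1 + X) - P = q := by
    conv_rhs => rw [q.as_sum_range_C_mul_X_pow]
    rw [sum_comp, ← Finset.sum_sub_distrib]
    refine Finset.sum_congr rfl fun k _ => ?_
    rw [mul_comp, C_comp, hB, mul_add, add_sub_cancel_left, nsmul_eq_mul, ← mul_assoc,
      ← C_eq_natCast, ← C_mul]
    push_cast
    field_simp
  refine ⟨P + C (a - P.eval 0), by simp, fun t => ?_⟩
  have hPt := congrArg (eval t) hP
  simp only [eval_sub, eval_comp, eval_add, eval_one, eval_X] at hPt
  simp only [eval_add, eval_C, add_comm t 1]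
  linear_combination hPt

theorem Polynomial.natDegree_taylor_sub_le {R : Type*} [CommRing R] (r : R) {p : R[X]} {d : ℕ}
    (hp : p.natDegree ≤ d + 1) : (taylor r p - p).natDegree ≤ d := by
  refine natDegree_le_iff_coeff_eq_zero.2 fun n hn => ?_
  rw [coeff_sub]
  obtain rfl | hlt : n = p.natDegree ∨ p.natDegree < n := by omega
  · rw [coeff_taylor_natDegree, coeff_natDegree, sub_self]
  · rw [coeff_eq_zero_of_natDegree_lt hlt,
      coeff_eq_zero_of_natDegree_lt (by rwa [natDegree_taylor]), sub_zero]

theorem eq_of_forall_add_one_eq_mul {M : Type*} [MulZeroClass M] [IsLeftCancelMulZero M]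
    {u v w : ℤ → M} (hw : ∀ n, w n ≠ 0) (hu : ∀ n, u (n + 1) = w n * u n)
    (hv : ∀ n, v (n + 1) = w n * v n) (h0 : u 0 = v 0) : u = v := by
  funext n
  induction n using Int.induction_on with
  | zero => exact h0
  | succ n ih => rw [hu, hv, ih]
  | pred n ih => exact mul_left_cancel₀ (hw (-n - 1)) (by rw [← hu, ← hv, sub_add_cancel, ih])

def expTwoPiI (t : ℝ) : ℂ := Complex.exp (2 * Real.pi * Complex.I * t)

theorem expTwoPiI_add (a b : ℝ) : expTwoPiI (a + b) = expTwoPiI a * expTwoPiI b := by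
  simp only [expTwoPiI, Complex.ofReal_add, mul_add, Complex.exp_add]

theorem expTwoPiI_ne_zero (a : ℝ) : expTwoPiI a ≠ 0 := Complex.exp_ne_zero _

theorem norm_expTwoPiI (a : ℝ) : ‖expTwoPiI a‖ = 1 := by
  rw [expTwoPiI, mul_comm, ← mul_assoc, ← Complex.ofReal_ofNat, ← Complex.ofReal_mul,
    ← Complex.ofReal_mul, Complex.norm_exp_ofReal_mul_I]

theorem conj_expTwoPiI (a : ℝ) : starRingEnd ℂ (expTwoPiI a) = expTwoPiI (-a) := by
  simp [expTwoPiI, ← Complex.exp_conj, map_ofNat]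

theorem exists_expTwoPiI_eq {c : ℂ} (hc : ‖c‖ = 1) : ∃ a : ℝ, expTwoPiI a = c := by
  refine ⟨c.arg / (2 * Real.pi), ?_⟩
  conv_rhs => rw [← c.norm_mul_exp_arg_mul_I, hc]
  simp only [expTwoPiI, Complex.ofReal_div, Complex.ofReal_mul, Complex.ofReal_ofNat,
    Complex.ofReal_one, one_mul]
  congr 1
  field_simp

theorem Equiv.Perm.zpow_add_one_apply {α : Type*} (s : Equiv.Perm α) (n : ℤ) (x : α) :
    (s ^ (n + 1)) x = s ((s ^ n) x) := by
  rw [add_comm, zpow_one_add, Equiv.Perm.mul_apply]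

section Orbit

variable {X : Type*} [TopologicalSpace X] (s : Equiv.Perm X) (x : X)

theorem exists_eq_expTwoPiI_of_mem_QEm {m : ℕ} {g : C(X, ℂ)} (hg : g ∈ QEm s m) :
    ∃ p : ℝ[X], ∀ n : ℤ, g ((s ^ n) x) = expTwoPiI (p.eval (n : ℝ)) := by
  induction m generalizing g with
  | zero =>
    obtain ⟨hnorm, c, hc⟩ := hg
    obtain ⟨a, ha⟩ := exists_expTwoPiI_eq (hc x ▸ hnorm x)
    exact ⟨C a, fun n => by rw [hc, eval_C, ha]⟩
  | succ m ih =>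
    obtain ⟨hnorm, f, hf, hfg⟩ := hg
    obtain ⟨q, hq⟩ := ih hf
    obtain ⟨a, ha⟩ := exists_expTwoPiI_eq (hnorm x)
    obtain ⟨p, hp0, hp⟩ := exists_eval_add_one_eq q a
    refine ⟨p, congrFun (eq_of_forall_add_one_eq_mul (w := fun n => expTwoPiI (q.eval (n : ℝ)))
      (fun _ => expTwoPiI_ne_zero _) (fun n => ?_) (fun n => ?_) ?_)⟩
    · simp only [Equiv.Perm.zpow_add_one_apply, hfg, hq]
    · simp only [Int.cast_add, Int.cast_one, hp, expTwoPiI_add, mul_comm]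
    · simp [hp0, ha]

variable {s x}

theorem mem_QEm_of_forall_eq_expTwoPiI (hs : Continuous s)
    (hx : Dense (range fun n : ℤ => (s ^ n) x)) {d : ℕ} {p : ℝ[X]} (hp : p.natDegree ≤ d)
    {g : C(X, ℂ)} (hg : ∀ n : ℤ, g ((s ^ n) x) = expTwoPiI (p.eval (n : ℝ))) : g ∈ QEm s d := by
  induction d generalizing p g with
  | zero =>
    rw [eq_C_of_natDegree_le_zero hp] at hg
    have hconst : ∀ y, g y = expTwoPiI (p.coeff 0) :=
      hx.induction (forall_mem_range.2 fun n => by rw [hg, eval_C])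
        (isClosed_eq g.continuous continuous_const)
    exact ⟨fun y => by rw [hconst, norm_expTwoPiI], _, hconst⟩
  | succ d ih =>
    have hnorm : ∀ y, ‖g y‖ = 1 :=
      hx.induction (forall_mem_range.2 fun n => by rw [hg, norm_expTwoPiI])
        (isClosed_eq (by fun_prop) continuous_const)
    let f : C(X, ℂ) := ⟨fun y => g (s y) * starRingEnd ℂ (g y), by fun_prop⟩
    have hf : f ∈ QEm s d := by
      refine ih (p := taylor 1 p - p) (natDegree_taylor_sub_le 1 hp) fun n => ?_
      simp only [f, ContinuousMap.coe_mk, ← Equiv.Perm.zpow_add_one_apply, hg, conj_expTwoPiI,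
        ← expTwoPiI_add, ← sub_eq_add_neg, eval_sub, taylor_eval, Int.cast_add, Int.cast_one]
    refine ⟨hnorm, f, hf, fun y => ?_⟩
    simp [f, mul_assoc, Complex.conj_mul', hnorm]

variable (s x) [CompactSpace X]

def omegaSeqₗ : C(X, ℂ) →ₗ[ℂ] BoundedContinuousFunction ℤ ℂ where
  toFun := omegaSeq s x
  map_add' _ _ := rfl
  map_smul' _ _ := rfl

variable {s x}

theorem isometry_omegaSeq (hx : Dense (range fun n : ℤ => (s ^ n) x)) :
    Isometry (omegaSeq s x) :=
  AddMonoidHomClass.isometry_of_norm (omegaSeqₗ s x) fun f =>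
    le_antisymm
      ((BoundedContinuousFunction.norm_le (norm_nonneg _)).2 fun _ => f.norm_coe_le_norm _)
      ((ContinuousMap.norm_le _ (norm_nonneg _)).2 <|
        hx.induction (forall_mem_range.2 (omegaSeq s x f).norm_coe_le_norm)
          (isClosed_le (by fun_prop) continuous_const))

theorem image_omegaSeq_iUnion_QEm (hs : Continuous s)
    (hx : Dense (range fun n : ℤ => (s ^ n) x)) :
    omegaSeq s x '' ⋃ m, QEm s m = range (omegaSeq s x) ∩ Pall := by
  ext F
  constructor
  · rintro ⟨g, hg, rfl⟩
    obtain ⟨m, hgm⟩ := mem_iUnion.1 hg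
    obtain ⟨p, hp⟩ := exists_eq_expTwoPiI_of_mem_QEm s x hgm
    exact ⟨mem_range_self g, mem_iUnion.2 ⟨p.natDegree, p, le_rfl, hp⟩⟩
  · rintro ⟨⟨g, rfl⟩, hP⟩
    obtain ⟨d, p, hpd, hp⟩ := mem_iUnion.1 hP
    exact ⟨g, mem_iUnion.2 ⟨d, mem_QEm_of_forall_eq_expTwoPiI hs hx hpd hp⟩, rfl⟩

end Orbit

theorem stmt12_general {X : Type*} [TopologicalSpace X] [CompactSpace X]
    (s : Equiv.Perm X) (hs : Continuous ⇑s)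
    (hmin : ∀ y : X, Dense (Set.range fun n : ℤ => (s ^ n) y)) (x : X) :
    (HasQDS ⇑s ↔
      Set.range (omegaSeq s x) ⊆
        closure (↑(Submodule.span ℂ (Set.range (omegaSeq s x) ∩ Pall)) :
          Set (BoundedContinuousFunction ℤ ℂ))) ∧
    (HasQDS ⇑s → Set.range (omegaSeq s x) ⊆ Wset) := by
  have hiso := isometry_omegaSeq (hmin x)
  have hspan : Submodule.span ℂ (range (omegaSeq s x) ∩ Pall) =
      (Submodule.span ℂ (⋃ m, QEm s m)).map (omegaSeqₗ s x) := by
    rw [Submodule.map_span, ← image_omegaSeq_iUnion_QEm hs (hmin x)]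
    rfl
  have hiff : HasQDS s ↔ range (omegaSeq s x) ⊆
      closure (Submodule.span ℂ (range (omegaSeq s x) ∩ Pall) : Set _) := by
    rw [HasQDS, hiso.isEmbedding.isInducing.dense_iff, range_subset_iff, hspan]
    rfl
  exact ⟨hiff, fun hQ =>
    (hiff.1 hQ).trans (closure_mono (Submodule.span_mono inter_subset_right))⟩

/-- For a minimal system `(X,s)` and `x ∈ X`: `(X,s)` has quasi-discrete
spectrum iff the linear span of `ω_x C(X) ∩ 𝒫` is dense in `ω_x C(X)`;
consequently, if `(X,s)` has quasi-discrete spectrum then `ω_x C(X) ⊆ 𝒲`. -/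
theorem stmt12 {X : Type*} [TopologicalSpace X] [CompactSpace X] [T2Space X]
    (s : Equiv.Perm X) (hs : Continuous ⇑s) (hs' : Continuous ⇑s.symm)
    (hmin : ∀ y : X, Dense (Set.range fun n : ℤ => (s ^ n) y)) (x : X) :
    (HasQDS ⇑s ↔
      Set.range (omegaSeq s x) ⊆
        closure (↑(Submodule.span ℂ (Set.range (omegaSeq s x) ∩ Pall)) :
          Set (BoundedContinuousFunction ℤ ℂ))) ∧
    (HasQDS ⇑s → Set.range (omegaSeq s x) ⊆ Wset) :=
  stmt12_general s hs hmin x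

end
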